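/- Projection preserves value-hood under substitution: if σ maps variables to values and the projection ⟦e[σ]⟧_ℓ of the substituted expression is a value, then ⟦e⟧_ℓ (if defined) is also a value. -/

import Mathlib

/-- Annotations: compute, prove, or both. -/
inductive Ann : Type
  | C : Ann
  | P : Ann
  | CP : Ann
deriving DecidableEq

/-- Projection labels: a single procedure. -/
inductive Label : Type
  | C : Label
  | P : Label
deriving DecidableEq

/-- `subA ℓ a` holds when the procedure `ℓ` is contained in annotation `a`
(treating C, P ⊆ CP). -/
def subA : Label → Ann → Bool
  | .C, .C => true
  | .C, .CP => true
  | .P, .P => true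
  | .P, .CP => true
  | _, _ => false

/-- Underlying values, possibly containing variables. -/
inductive V : Type
  | unit : V
  | const : Nat → V
  | var : String → V
deriving DecidableEq

/-- Annotated expressions: annotated values, let-expressions with a labeled
bound variable, and conditionals with annotated guards. -/
inductive AExpr : Type
  | aval : V → Ann → AExpr
  | alet : String → Ann → AExpr → AExpr → AExpr
  | aif : V → Ann → AExpr → AExpr → AExpr

/-- Projected (base) expressions, including sequencing. -/
inductive BExpr : Type
  | bval : V → BExpr
  | blet : String → BExpr → BExpr → BExpr
  | bseq : BExpr → BExpr → BExpr
  | bif : V → BExpr → BExpr → BExpr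
deriving DecidableEq

/-- A base expression is a value when it is `bval`. -/
def isVal : BExpr → Bool
  | .bval _ => true
  | _ => false

/-- The partial projection `⟦·⟧_ℓ`: annotated values project to the underlying
value when visible and to unit otherwise; visible lets project to lets,
invisible lets collapse (dropping an inert value or keeping a sequencing);
visible conditionals project to conditionals, invisible ones require equal
branch projections. -/
def proj (ℓ : Label) : AExpr → Option BExpr
  | .aval v a => some (.bval (if subA ℓ a then v else .unit))
  | .alet x l e₁ e₂ =>
      if subA ℓ l then
        match proj ℓ e₁, proj ℓ e₂ with
        | some p₁, some p₂ => some (.blet x p₁ p₂)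
        | _, _ => none
      else
        match proj ℓ e₁, proj ℓ e₂ with
        | some p₁, some p₂ => if isVal p₁ then some p₂ else some (.bseq p₁ p₂)
        | _, _ => none
  | .aif v a e₁ e₂ =>
      if subA ℓ a then
        match proj ℓ e₁, proj ℓ e₂ with
        | some p₁, some p₂ => some (.bif v p₁ p₂)
        | _, _ => none
      else
        match proj ℓ e₁, proj ℓ e₂ with
        | some p₁, some p₂ => if p₁ = p₂ then some p₁ else none
        | _, _ => none

/-- Apply a substitution `σ` (mapping variables to values) to an underlying
value. -/
def substVs (s : String → V) : V → V
  | .var y => s y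
  | w => w

/-- Apply a substitution structurally to an annotated expression, respecting
binders (the bound variable of a let is left untouched in its body). -/
def substAs (s : String → V) : AExpr → AExpr
  | .aval w a => .aval (substVs s w) a
  | .alet y l e1 e2 =>
      .alet y l (substAs s e1) (substAs (fun z => if z = y then .var z else s z) e2)
  | .aif w a e1 e2 => .aif (substVs s w) a (substAs s e1) (substAs s e2)

/-! Whether `⟦e⟧_ℓ` is a value, when it is defined, is decided by the annotations and the shape
of `e` alone, never by the values in `e`; a substitution changes only those values. -/

/-- Whether `proj ℓ e`, when defined, is a value. -/
def projValued (ℓ : Label) : AExpr → Bool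
  | .aval _ _ => true
  | .alet _ l e₁ e₂ => !subA ℓ l && projValued ℓ e₁ && projValued ℓ e₂
  | .aif _ a e₁ _ => !subA ℓ a && projValued ℓ e₁

theorem isVal_eq_projValued {ℓ : Label} {e : AExpr} {b : BExpr} (h : proj ℓ e = some b) :
    isVal b = projValued ℓ e := by
  induction e generalizing b with
  | aval =>
    cases h
    rfl
  | alet _ l e₁ e₂ ih₁ ih₂ =>
    simp only [proj] at h
    split_ifs at h with hl <;> split at h <;> try cases h
    · simp [projValued, hl, isVal]
    · rename_i p₁ p₂ h₁ h₂
      rw [projValued, ← ih₁ h₁, ← ih₂ h₂]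
      split_ifs at h with hv <;> cases h
      · simp [hl, hv]
      · simp [hl, hv, isVal.eq_2]
  | aif _ a e₁ _ ih₁ _ =>
    simp only [proj] at h
    split_ifs at h with hl <;> split at h <;> try cases h
    · simp [projValued, hl, isVal]
    · rename_i p₁ p₂ h₁ h₂
      split_ifs at h
      cases h
      simp [projValued, hl, ih₁ h₁]

theorem projValued_substAs (ℓ : Label) (s : String → V) (e : AExpr) :
    projValued ℓ (substAs s e) = projValued ℓ e := by
  induction e generalizing s <;> simp_all [substAs, projValued]

/-- Projection preserves value-hood under substitution: if the projection of
the substituted expression is a value, then the projection of the original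
expression (if defined) is also a value. -/
theorem proj_subst_isVal (l : Label) (s : String → V) (e : AExpr)
    (b b' : BExpr)
    (h1 : proj l (substAs s e) = some b) (hb : isVal b = true)
    (h2 : proj l e = some b') :
    isVal b' = true := by
  rw [isVal_eq_projValued h1, projValued_substAs] at hb
  rwa [isVal_eq_projValued h2]
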